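/- arXiv:math/0312321 — 2 statements merged into one kernel-verified Lean document; each statement's English description precedes it below -/
import Mathlib

section
/- Let P be a monic strictly hyperbolic polynomial of degree n ≥ 2 and Q a polynomial of degree n−1 with leading coefficient n whose zeros strictly interlace those of P. For λ ∈ ℝ let x_i(λ), 1 ≤ i ≤ n, denote the zeros of P − λQ, labeled increasingly with x_i(0) the zeros of P. Then each x_i(λ) is a strictly increasing function of λ. -/
/-!
The sign of `∏ j < n, (t - z j)` at a point `t` that is not one of the `z j` is
`(-1) ^ #{j | t < z j}`. Since `Q` vanishes at the `y k`, each `P - λ Q` has there the sign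
`(-1) ^ (n - 1 - k)` of `P`; as the number of its roots above `y k` is at most `n`, decreasing
in `k` and of the parity of `n - 1 - k`, it equals `n - 1 - k`, i.e. the roots of `P - λ Q`
interlace the `y k` just as those of `P` do. Hence `Q (x_k(λ))` has sign `(-1) ^ (n - 1 - k)`,
and for `a < b` the value `(P - a Q)(x_k(b)) = (b - a) Q(x_k(b))` has that same sign, which by
the same count puts `x_k(b)` strictly between `x_k(a)` and `x_{k+1}(a)`.
-/

open Polynomial Finset

lemma neg_one_pow_card_filter_mul_prod_sub_pos {ι : Type*} (s : Finset ι) (z : ι → ℝ)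
    {t : ℝ} (ht : ∀ j ∈ s, z j ≠ t) : 0 < (-1) ^ #{j ∈ s | t < z j} * ∏ j ∈ s, (t - z j) := by
  rw [← prod_filter_mul_prod_filter_not s (t < z ·), ← mul_assoc, ← prod_neg]
  refine mul_pos (prod_pos fun j hj => ?_) (prod_pos fun j hj => ?_)
  · simp only [Finset.mem_filter] at hj
    exact neg_pos.2 (sub_neg.2 hj.2)
  · simp only [Finset.mem_filter, not_lt] at hj
    exact sub_pos.2 (hj.2.lt_of_ne (ht j hj.1))

lemma mod_two_eq_of_neg_one_pow_mul_pos {a b : ℕ} {v : ℝ} (ha : 0 < (-1) ^ a * v)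
    (hb : 0 < (-1) ^ b * v) : a % 2 = b % 2 := by
  rcases Nat.even_or_odd a with ha' | ha' <;> rcases Nat.even_or_odd b with hb' | hb' <;>
    simp only [ha'.neg_one_pow, hb'.neg_one_pow] at ha hb <;>
    grind

lemma eq_sub_of_antitone_of_mod_two {n m : ℕ} (hnm : n ≤ m + 1) {c : ℕ → ℕ}
    (hle : ∀ k < m, c k ≤ n) (hanti : ∀ k, k + 1 < m → c (k + 1) ≤ c k)
    (hpar : ∀ k < m, c k % 2 = (n - 1 - k) % 2) {k : ℕ} (hk : k < m) : c k = n - 1 - k := by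
  have upper : ∀ k < m, c k ≤ n - 1 - k := by
    intro k hk
    induction k with
    | zero => have := hle 0 hk; have := hpar 0 hk; omega
    | succ k ih =>
      have := ih (by omega); have := hanti k hk
      have := hpar k (by omega); have := hpar (k + 1) hk; omega
  have lower : ∀ d k, k + d + 1 = m → n - 1 - k ≤ c k := by
    intro d
    induction d with
    | zero => intro k hk; have := hpar k (by omega); omega
    | succ d ih =>
      intro k hk
      have := ih (k + 1) (by omega); have := hanti k (by omega)
      have := hpar k (by omega); have := hpar (k + 1) (by omega); omega
  have := upper k hk
  have := lower (m - 1 - k) k (by omega)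
  omega

lemma lt_iff_sub_card_filter_le {n : ℕ} {z : ℕ → ℝ} (hz : StrictMonoOn z (Set.Iio n))
    (t : ℝ) {j : ℕ} (hj : j < n) : t < z j ↔ n - #{j ∈ range n | t < z j} ≤ j := by
  constructor
  · intro h
    have hsub : Ico j n ⊆ {j ∈ range n | t < z j} := fun k hk => by
      simp only [Finset.mem_Ico, Finset.mem_filter, Finset.mem_range] at hk ⊢
      exact ⟨hk.2, h.trans_le (hz.monotoneOn hj hk.2 hk.1)⟩
    have := card_le_card hsub
    simp only [Nat.card_Ico] at this
    omega
  · intro h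
    by_contra h'
    have hsub : {j ∈ range n | t < z j} ⊆ Ico (j + 1) n := fun k hk => by
      simp only [Finset.mem_Ico, Finset.mem_filter, Finset.mem_range] at hk ⊢
      refine ⟨not_le.1 fun hkj => h' (hk.2.trans_le (hz.monotoneOn hk.1 hj hkj)), hk.1⟩
    have := card_le_card hsub
    simp only [Nat.card_Ico] at this
    omega

lemma neg_one_pow_sub_mul_prod_sub_pos {n k : ℕ} {z : ℕ → ℝ} {t : ℝ}
    (hlt : ∀ j < n, z j < t ↔ j < k) (hgt : ∀ j < n, t < z j ↔ k ≤ j) :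
    0 < (-1) ^ (n - k) * ∏ j ∈ range n, (t - z j) := by
  have hcard : #{j ∈ range n | t < z j} = n - k := by
    rw [← Nat.card_Ico k n]
    congr 1
    ext j
    simp only [Finset.mem_filter, Finset.mem_range, Finset.mem_Ico]
    constructor
    · exact fun ⟨hj, h⟩ => ⟨(hgt j hj).1 h, hj⟩
    · exact fun ⟨hkj, hj⟩ => ⟨hj, (hgt j hj).2 hkj⟩
  rw [← hcard]
  refine neg_one_pow_card_filter_mul_prod_sub_pos _ _ fun j hj h => ?_
  rcases lt_or_ge j k with hjk | hkj
  · exact ((hlt j (mem_range.1 hj)).2 hjk).ne h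
  · exact ((hgt j (mem_range.1 hj)).2 hkj).ne' h

/-- `w k` lies strictly between `z k` and `z (k + 1)` for every `k < m`, where only the `z j`
with `j < n` count; this form does not presuppose that `z` is monotone. -/
def Interlaces (z w : ℕ → ℝ) (n m : ℕ) : Prop :=
  ∀ k < m, ∀ j < n, (z j < w k ↔ j ≤ k) ∧ (w k < z j ↔ k < j)

namespace Interlaces

variable {z w : ℕ → ℝ} {n m : ℕ}

lemma strictMonoOn (h : Interlaces z w n m) (hmn : m ≤ n) : StrictMonoOn w (Set.Iio m) :=
  fun i hi j hj hij =>
    have hjn : j < n := (Set.mem_Iio.1 hj).trans_le hmn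
    ((h i hi j hjn).2.2 hij).trans ((h j hj j hjn).1.2 le_rfl)

lemma neg_one_pow_mul_prod_sub_left_pos (h : Interlaces z w n m) {k : ℕ} (hk : k < m) :
    0 < (-1) ^ (n - 1 - k) * ∏ j ∈ range n, (w k - z j) := by
  rw [Nat.sub_sub, add_comm]
  exact neg_one_pow_sub_mul_prod_sub_pos
    (fun j hj => (h k hk j hj).1.trans Nat.lt_add_one_iff.symm) fun j hj => (h k hk j hj).2

lemma neg_one_pow_mul_prod_sub_right_pos (h : Interlaces z w n m) {k : ℕ} (hk : k < n) :
    0 < (-1) ^ (m - k) * ∏ j ∈ range m, (z k - w j) :=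
  neg_one_pow_sub_mul_prod_sub_pos (fun j hj => (h j hj k hk).2) fun j hj => (h j hj k hk).1

end Interlaces

lemma interlaces_of_lt_of_lt {n : ℕ} {z w : ℕ → ℝ} (hz : StrictMonoOn z (Set.Iio n))
    (hzw : ∀ i, i + 1 < n → z i < w i ∧ w i < z (i + 1)) : Interlaces z w n (n - 1) := by
  intro k hk j hj
  have hk' : k + 1 < n := by omega
  have hlo : j ≤ k → z j < w k := fun h =>
    (hz.monotoneOn hj (Set.mem_Iio.2 (by omega)) h).trans_lt (hzw k hk').1
  have hhi : k < j → w k < z j := fun h =>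
    (hzw k hk').2.trans_le (hz.monotoneOn (Set.mem_Iio.2 hk') hj h)
  exact ⟨⟨fun h => not_lt.1 fun hkj => (hhi hkj).not_gt h, hlo⟩,
    ⟨fun h => not_le.1 fun hjk => (hlo hjk).not_gt h, hhi⟩⟩

theorem interlaces_of_neg_one_pow_mul_prod_sub_pos {n m : ℕ} {z w : ℕ → ℝ}
    (hz : StrictMonoOn z (Set.Iio n)) (hw : StrictMonoOn w (Set.Iio m)) (hnm : n ≤ m + 1)
    (hsign : ∀ k < m, 0 < (-1) ^ (n - 1 - k) * ∏ j ∈ range n, (w k - z j)) :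
    Interlaces z w n m := by
  have hne : ∀ k < m, ∀ j ∈ range n, z j ≠ w k := fun k hk j hj h => by
    have := hsign k hk
    rw [prod_eq_zero hj (by rw [h, sub_self]), mul_zero] at this
    exact this.false
  intro k hk j hj
  have hcount : #{j ∈ range n | w k < z j} = n - 1 - k := by
    refine eq_sub_of_antitone_of_mod_two (c := fun k => #{j ∈ range n | w k < z j}) hnm
      (fun k _ => (card_filter_le _ _).trans (card_range n).le) (fun k hk => ?_)
      (fun k hk => ?_) hk
    · exact card_le_card (monotone_filter_right _ fun j _ h =>
        (hw (Set.mem_Iio.2 (by omega)) hk (Nat.lt_succ_self k)).trans h)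
    · exact mod_two_eq_of_neg_one_pow_mul_pos
        (neg_one_pow_card_filter_mul_prod_sub_pos _ _ (hne k hk)) (hsign k hk)
  have hgt := lt_iff_sub_card_filter_le hz (w k) hj
  have hlt : z j < w k ↔ ¬ w k < z j :=
    ⟨fun h => h.not_gt, fun h => (not_lt.1 h).lt_of_ne (hne k hk j (mem_range.2 hj))⟩
  rw [hlt, hgt, hcount]
  omega

theorem Polynomial.Monic.eq_prod_X_sub_C_of_isRoot {R ι : Type*} [CommRing R] [IsDomain R]
    {p : R[X]} (hp : p.Monic) {s : Finset ι} {z : ι → R} (hz : Set.InjOn z s)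
    (hroot : ∀ i ∈ s, p.IsRoot (z i)) (hdeg : p.natDegree ≤ #s) :
    p = ∏ i ∈ s, (X - C (z i)) := by
  have hle : s.val.map z ≤ p.roots :=
    (Multiset.le_iff_subset (Multiset.Nodup.map_on hz s.nodup)).2 fun a ha => by
      obtain ⟨i, hi, rfl⟩ := Multiset.mem_map.1 ha
      exact (mem_roots hp.ne_zero).2 (hroot i hi)
  refine eq_of_monic_of_dvd_of_natDegree_le (monic_prod_of_monic _ _ fun i _ => monic_X_sub_C _)
    hp ?_ (by simpa using hdeg)
  have := (Multiset.prod_X_sub_C_dvd_iff_le_roots hp.ne_zero _).2 hle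
  rwa [Multiset.map_map] at this

lemma Polynomial.Monic.eval_eq_prod_sub_of_strictMonoOn {p : ℝ[X]} (hp : p.Monic) {n : ℕ}
    (hdeg : p.natDegree = n) {z : ℕ → ℝ} (hz : StrictMonoOn z (Set.Iio n))
    (hroot : ∀ i < n, p.IsRoot (z i)) (t : ℝ) : p.eval t = ∏ j ∈ range n, (t - z j) := by
  rw [hp.eq_prod_X_sub_C_of_isRoot (hz.injOn.mono fun i hi => mem_range.1 hi)
    (fun i hi => hroot i (mem_range.1 hi)) (by simp [hdeg]), eval_prod]
  simp

lemma Polynomial.Monic.eval_sub_C_mul_eq_prod_sub {P Q : ℝ[X]} (hP : P.Monic) {n : ℕ}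
    (hPdeg : P.natDegree = n) (hQdeg : Q.natDegree < n) {l : ℝ} {z : ℕ → ℝ}
    (hz : StrictMonoOn z (Set.Iio n)) (hroot : ∀ i < n, (P - C l * Q).IsRoot (z i)) (t : ℝ) :
    (P - C l * Q).eval t = ∏ j ∈ range n, (t - z j) := by
  have hdeg : (C l * Q).natDegree < P.natDegree := hPdeg ▸ (natDegree_C_mul_le l Q).trans_lt hQdeg
  exact (hP.sub_of_left (degree_lt_degree hdeg)).eval_eq_prod_sub_of_strictMonoOn
    ((natDegree_sub_eq_left_of_natDegree_lt hdeg).trans hPdeg) hz hroot t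

lemma Polynomial.eval_sub_C_mul_of_isRoot {R : Type*} [CommRing R] {p q : R[X]} {a b t : R}
    (h : (p - C b * q).IsRoot t) : (p - C a * q).eval t = (b - a) * q.eval t := by
  simp only [IsRoot, eval_sub, eval_mul, eval_C] at h ⊢
  linear_combination h

theorem roots_strictMono_in_lambda_general (n : ℕ) (x y : ℕ → ℝ)
    (hx : ∀ i j, i < j → j < n → x i < x j)
    (hinter : ∀ i, i + 1 < n → x i < y i ∧ y i < x (i + 1))
    (P Q : Polynomial ℝ)
    (hP : P = ∏ i ∈ Finset.range n, (X - C (x i)))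
    (hQ : Q = C (n : ℝ) * ∏ i ∈ Finset.range (n - 1), (X - C (y i)))
    (ζ : ℝ → ℕ → ℝ)
    (hroot : ∀ l : ℝ, ∀ i < n, (P - C l * Q).IsRoot (ζ l i))
    (hmono : ∀ l : ℝ, ∀ i j, i < j → j < n → ζ l i < ζ l j) :
    ∀ i < n, StrictMono (fun l : ℝ => ζ l i) := by
  intro i hi
  have hζm (l : ℝ) : StrictMonoOn (ζ l) (Set.Iio n) := fun i _ j hj hij => hmono l i j hij hj
  have hxy : Interlaces x y n (n - 1) :=
    interlaces_of_lt_of_lt (fun i _ j hj hij => hx i j hij hj) hinter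
  have hPm : P.Monic := hP ▸ monic_prod_of_monic _ _ fun i _ => monic_X_sub_C _
  have hQdeg : Q.natDegree < n := by
    rw [hQ]
    exact (natDegree_C_mul_le _ _).trans_lt (by simp; omega)
  have heval (l t : ℝ) : (P - C l * Q).eval t = ∏ j ∈ range n, (t - ζ l j) :=
    hPm.eval_sub_C_mul_eq_prod_sub (by simp [hP]) hQdeg (hζm l) (hroot l) t
  have hQy : ∀ k < n - 1, Q.eval (y k) = 0 := fun k hk => by
    rw [hQ, eval_mul, eval_prod, prod_eq_zero (mem_range.2 hk) (by simp), mul_zero]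
  have hζy (l : ℝ) : Interlaces (ζ l) y n (n - 1) :=
    interlaces_of_neg_one_pow_mul_prod_sub_pos (hζm l) (hxy.strictMonoOn (by omega)) (by omega)
      fun k hk => by
        rw [← heval, eval_sub, eval_mul, hQy k hk, mul_zero, sub_zero, hP, eval_prod]
        simpa using hxy.neg_one_pow_mul_prod_sub_left_pos hk
  have hQζ (l : ℝ) {k : ℕ} (hk : k < n) : 0 < (-1) ^ (n - 1 - k) * Q.eval (ζ l k) := by
    rw [hQ, eval_mul, eval_prod, eval_C, mul_left_comm]
    exact mul_pos (Nat.cast_pos.2 (by omega))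
      (by simpa using (hζy l).neg_one_pow_mul_prod_sub_right_pos hk)
  intro a b hab
  have hζab : Interlaces (ζ a) (ζ b) n n :=
    interlaces_of_neg_one_pow_mul_prod_sub_pos (hζm a) (hζm b) le_self_add fun k hk => by
      rw [← heval, eval_sub_C_mul_of_isRoot (hroot b k hk), mul_left_comm]
      exact mul_pos (sub_pos.2 hab) (hQζ b hk)
  exact (hζab i hi i hi).1.2 le_rfl

theorem roots_strictMono_in_lambda (n : ℕ) (hn : 2 ≤ n) (x y : ℕ → ℝ)
    (hx : ∀ i j, i < j → j < n → x i < x j)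
    (hinter : ∀ i, i + 1 < n → x i < y i ∧ y i < x (i + 1))
    (P Q : Polynomial ℝ)
    (hP : P = ∏ i ∈ Finset.range n, (X - C (x i)))
    (hQ : Q = C (n : ℝ) * ∏ i ∈ Finset.range (n - 1), (X - C (y i)))
    (ζ : ℝ → ℕ → ℝ)
    (hroot : ∀ l : ℝ, ∀ i < n, (P - C l * Q).IsRoot (ζ l i))
    (hmono : ∀ l : ℝ, ∀ i j, i < j → j < n → ζ l i < ζ l j)
    (hzero : ∀ i < n, ζ 0 i = x i) :
    ∀ i < n, StrictMono (fun l : ℝ => ζ l i) :=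
  roots_strictMono_in_lambda_general n x y hx hinter P Q hP hQ ζ hroot hmono
end

section
/- Let P be a monic strictly hyperbolic polynomial of degree n ≥ 2 and λ ∈ ℝ. Then P and P − λP′ have no common roots when λ ≠ 0, and P − λP′ is strictly hyperbolic. -/
/-!
For `l ≠ 0`, `P - l P'` is, up to the nonvanishing factor `-exp (-t / l) / l`, the derivative of
`t ↦ exp (-t / l) * P t`, so Rolle's theorem puts one of its roots strictly between any two roots
of `P`. One more root lies beyond the largest root `m` of `P` when `l > 0`, since
`(P - l P')(m) = -l P'(m) < 0` while `P - l P'` is monic; the case `l < 0` is its mirror image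
under `t ↦ -t`. These `n` distinct roots exhaust the degree. At a root `t` of `P` we have
`(P - l P')(t) = -l P'(t) ≠ 0`, because the roots of `P` are simple.
-/

open Polynomial

namespace Polynomial

section

variable {R : Type*} [CommRing R]

theorem degree_C_mul_derivative_lt {p : R[X]} (hp : p ≠ 0) (l : R) :
    (C l * derivative p).degree < p.degree := by
  rw [C_mul']
  exact (degree_smul_le l _).trans_lt (degree_derivative_lt hp)

theorem Monic.sub_C_mul_derivative [Nontrivial R] {p : R[X]} (hp : p.Monic) (l : R) :
    (p - C l * derivative p).Monic :=
  hp.sub_of_left (degree_C_mul_derivative_lt hp.ne_zero l)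

theorem natDegree_sub_C_mul_derivative {p : R[X]} (hp : p ≠ 0) (l : R) :
    (p - C l * derivative p).natDegree = p.natDegree :=
  natDegree_eq_of_degree_eq (degree_sub_eq_left_of_degree_lt (degree_C_mul_derivative_lt hp l))

theorem sub_C_mul_derivative_comp_neg_X (p : R[X]) (l : R) :
    (p - C l * derivative p).comp (-X) = p.comp (-X) - C (-l) * derivative (p.comp (-X)) := by
  simp [derivative_comp]

end

theorem card_roots_eq_natDegree_and_nodup_of_natDegree_le {R : Type*} [CommRing R] [IsDomain R] [DecidableEq R]
    {p : R[X]} (h : p.natDegree ≤ p.roots.toFinset.card) :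
    p.roots.card = p.natDegree ∧ p.roots.Nodup := by
  have h₁ := p.roots.toFinset_card_le
  have h₂ := p.card_roots'
  exact ⟨by omega, Multiset.toFinset_card_eq_card_iff_nodup.mp (by omega)⟩

theorem exists_isRoot_sub_C_mul_derivative_mem_Ioo {p : ℝ[X]} {l a b : ℝ} (hl : l ≠ 0)
    (hab : a < b) (ha : p.IsRoot a) (hb : p.IsRoot b) :
    ∃ c ∈ Set.Ioo a b, (p - C l * derivative p).IsRoot c := by
  set f : ℝ → ℝ := fun t ↦ Real.exp (-t / l) * p.eval t
  have hf : ∀ t, HasDerivAt f (-(Real.exp (-t / l) / l) * (p - C l * derivative p).eval t) t := by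
    intro t
    refine (((hasDerivAt_neg t).div_const l).exp.mul (p.hasDerivAt t)).congr_deriv ?_
    simp only [eval_sub, eval_mul, eval_C]
    field_simp
    ring
  obtain ⟨c, hc, hfc⟩ := exists_hasDerivAt_eq_zero hab
    (fun t _ ↦ (hf t).continuousAt.continuousWithinAt) (by simp [f, ha.eq_zero, hb.eq_zero])
    (fun t _ ↦ hf t)
  refine ⟨c, hc, ?_⟩
  simpa [Real.exp_ne_zero, hl] using hfc

end Polynomial

namespace Lagrange

section

variable {R ι : Type*} [CommRing R]

theorem nodal_neg (s : Finset ι) (v : ι → R) :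
    nodal s (-v) = C ((-1) ^ s.card) * (nodal s v).comp (-X) := by
  simp only [nodal, prod_comp, sub_comp, X_comp, C_comp, Pi.neg_apply, C_neg, sub_neg_eq_add]
  rw [Finset.prod_congr rfl fun i _ ↦ (neg_add' X (C (v i))).symm, Finset.prod_neg, ← mul_assoc,
    C_pow, C_neg, C_1, ← mul_pow, neg_one_mul, neg_neg, one_pow, one_mul]

theorem nodal_neg_sub_C_mul_derivative (s : Finset ι) (v : ι → R) (l : R) :
    nodal s (-v) - C (-l) * derivative (nodal s (-v)) =
      C ((-1) ^ s.card) * (nodal s v - C l * derivative (nodal s v)).comp (-X) := by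
  rw [sub_C_mul_derivative_comp_neg_X, nodal_neg, derivative_C_mul, mul_sub, mul_left_comm]

variable [IsDomain R] {s : Finset ι} {v : ι → R}

theorem eval_derivative_nodal_ne_zero (hv : Set.InjOn v s) {i : ι} (hi : i ∈ s) :
    (derivative (nodal s v)).eval (v i) ≠ 0 := by
  classical
  rw [eval_nodal_derivative_eval_node_eq hi]
  exact eval_nodal_not_at_node fun j hj ↦ (hv.ne_iff hi (s.mem_of_mem_erase hj)).mpr
    (s.ne_of_mem_erase hj).symm

theorem not_isRoot_nodal_sub_C_mul_derivative (hv : Set.InjOn v s) {l t : R} (hl : l ≠ 0)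
    (ht : (nodal s v).IsRoot t) : ¬ (nodal s v - C l * derivative (nodal s v)).IsRoot t := by
  obtain ⟨i, hi, hti⟩ := Finset.prod_eq_zero_iff.mp (eval_nodal (s := s) (v := v) ▸ ht.eq_zero)
  rw [sub_eq_zero.mp hti]
  simp [IsRoot, eval_nodal_at_node hi, hl, eval_derivative_nodal_ne_zero hv hi]

end

variable {ι : Type*} {s : Finset ι} {v : ι → ℝ}

theorem exists_isRoot_nodal_sub_C_mul_derivative_gt (hv : Set.InjOn v s) (hs : s.Nonempty)
    {l : ℝ} (hl : 0 < l) :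
    ∃ z, (∀ i ∈ s, v i < z) ∧ (nodal s v - C l * derivative (nodal s v)).IsRoot z := by
  classical
  set Q := nodal s v - C l * derivative (nodal s v)
  obtain ⟨i, hi, hmax⟩ := s.exists_max_image v hs
  have hderiv : 0 < (derivative (nodal s v)).eval (v i) := by
    rw [eval_nodal_derivative_eval_node_eq hi, eval_nodal]
    refine Finset.prod_pos fun j hj ↦ sub_pos.mpr ((hmax j (s.mem_of_mem_erase hj)).lt_of_ne ?_)
    exact (hv.ne_iff (s.mem_of_mem_erase hj) hi).mpr (s.ne_of_mem_erase hj)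
  have hQi : Q.eval (v i) < 0 := by
    simp only [Q, eval_sub, eval_mul, eval_C, eval_nodal_at_node hi, zero_sub, neg_neg_iff_pos]
    exact mul_pos hl hderiv
  have hQ : Q.Monic := nodal_monic.sub_C_mul_derivative l
  have hQdeg : 0 < Q.degree := by
    rw [degree_eq_natDegree hQ.ne_zero, natDegree_sub_C_mul_derivative nodal_ne_zero,
      natDegree_nodal]
    exact_mod_cast hs.card_pos
  have hQtop := Q.tendsto_atTop_of_leadingCoeff_nonneg hQdeg (hQ.leadingCoeff ▸ zero_le_one)
  obtain ⟨T, hQT, hiT⟩ :=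
    ((hQtop.eventually_gt_atTop 0).and (Filter.eventually_gt_atTop (v i))).exists
  obtain ⟨z, hz, hQz⟩ := intermediate_value_Ioo hiT.le Q.continuousOn ⟨hQi, hQT⟩
  exact ⟨z, fun j hj ↦ (hmax j hj).trans_lt hz.1, hQz⟩

theorem exists_isRoot_nodal_sub_C_mul_derivative_notMem_Ioo (hv : Set.InjOn v s)
    (hs : s.Nonempty) {l : ℝ} (hl : l ≠ 0) :
    ∃ z, (nodal s v - C l * derivative (nodal s v)).IsRoot z ∧
      ∀ i ∈ s, ∀ j ∈ s, z ∉ Set.Ioo (v i) (v j) := by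
  rcases hl.lt_or_gt with hl | hl
  · obtain ⟨z, hz, hQz⟩ := exists_isRoot_nodal_sub_C_mul_derivative_gt
      (v := -v) (neg_injective.comp_injOn hv) hs (l := -l) (neg_pos.mpr hl)
    rw [nodal_neg_sub_C_mul_derivative, IsRoot, eval_mul, eval_C, eval_comp,
      eval_neg, eval_X, mul_eq_zero] at hQz
    refine ⟨-z, hQz.resolve_left (pow_ne_zero _ (neg_ne_zero.mpr one_ne_zero)), ?_⟩
    exact fun i hi _ _ h ↦ (hz i hi).not_gt (lt_neg.mp h.1)
  · obtain ⟨z, hz, hQz⟩ := exists_isRoot_nodal_sub_C_mul_derivative_gt hv hs hl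
    exact ⟨z, hQz, fun _ _ j hj h ↦ (hz j hj).not_gt h.2⟩

theorem card_le_card_roots_toFinset_nodal_sub_C_mul_derivative (hv : Set.InjOn v s) (l : ℝ) :
    s.card ≤ (nodal s v - C l * derivative (nodal s v)).roots.toFinset.card := by
  classical
  set Q := nodal s v - C l * derivative (nodal s v)
  have hQ : Q ≠ 0 := (nodal_monic.sub_C_mul_derivative l).ne_zero
  have mem_roots_Q {a : ℝ} (ha : Q.IsRoot a) : a ∈ Q.roots.toFinset := by
    rw [Multiset.mem_toFinset, mem_roots hQ]
    exact ha
  rw [← Finset.card_image_of_injOn hv]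
  rcases s.eq_empty_or_nonempty with rfl | hs
  · simp
  by_cases hl : l = 0
  · refine Finset.card_le_card fun a ha ↦ ?_
    obtain ⟨i, hi, rfl⟩ := Finset.mem_image.mp ha
    exact mem_roots_Q (by simp [Q, hl, IsRoot, eval_nodal_at_node hi])
  obtain ⟨z, hQz, hz⟩ := exists_isRoot_nodal_sub_C_mul_derivative_notMem_Ioo hv hs hl
  calc (s.image v).card ≤ (Q.roots.toFinset.erase z).card + 1 := by
        refine Finset.card_le_of_interleaved fun a ha b hb hab _ ↦ ?_
        obtain ⟨i, hi, rfl⟩ := Finset.mem_image.mp ha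
        obtain ⟨j, hj, rfl⟩ := Finset.mem_image.mp hb
        obtain ⟨c, hc, hQc⟩ := exists_isRoot_sub_C_mul_derivative_mem_Ioo hl hab
          (eval_nodal_at_node hi) (eval_nodal_at_node hj)
        exact ⟨c, Finset.mem_erase.mpr ⟨fun h ↦ hz i hi j hj (h ▸ hc), mem_roots_Q hQc⟩, hc⟩
    _ = Q.roots.toFinset.card := Finset.card_erase_add_one (mem_roots_Q hQz)

theorem card_roots_nodal_sub_C_mul_derivative (hv : Set.InjOn v s) (l : ℝ) :
    (nodal s v - C l * derivative (nodal s v)).roots.card = s.card ∧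
      (nodal s v - C l * derivative (nodal s v)).roots.Nodup := by
  classical
  have hdeg : (nodal s v - C l * derivative (nodal s v)).natDegree = s.card := by
    rw [natDegree_sub_C_mul_derivative nodal_ne_zero, natDegree_nodal]
  rw [← hdeg]
  exact card_roots_eq_natDegree_and_nodup_of_natDegree_le
    (hdeg ▸ card_le_card_roots_toFinset_nodal_sub_C_mul_derivative hv l)

end Lagrange

theorem no_common_roots_and_strictly_hyperbolic_general (n : ℕ) (x : ℕ → ℝ)
    (hx : ∀ i j, i < j → j < n → x i < x j)
    (P : Polynomial ℝ)
    (hP : P = ∏ i ∈ Finset.range n, (X - C (x i))) :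
    ∀ l : ℝ,
      (P - C l * Polynomial.derivative P).roots.card = n ∧
      (P - C l * Polynomial.derivative P).roots.Nodup ∧
      (l ≠ 0 → ∀ t : ℝ, P.IsRoot t →
        ¬ (P - C l * Polynomial.derivative P).IsRoot t) := by
  intro l
  rw [← Lagrange.nodal_eq] at hP
  subst hP
  have hv : Set.InjOn x (Finset.range n) :=
    StrictMonoOn.injOn fun i _ j hj hij ↦ hx i j hij (Finset.mem_range.mp hj)
  obtain ⟨hcard, hnodup⟩ := Lagrange.card_roots_nodal_sub_C_mul_derivative hv l
  exact ⟨hcard.trans (Finset.card_range n), hnodup,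
    fun hl _ ↦ Lagrange.not_isRoot_nodal_sub_C_mul_derivative hv hl⟩

theorem no_common_roots_and_strictly_hyperbolic (n : ℕ) (hn : 2 ≤ n) (x : ℕ → ℝ)
    (hx : ∀ i j, i < j → j < n → x i < x j)
    (P : Polynomial ℝ)
    (hP : P = ∏ i ∈ Finset.range n, (X - C (x i))) :
    ∀ l : ℝ,
      (P - C l * Polynomial.derivative P).roots.card = n ∧
      (P - C l * Polynomial.derivative P).roots.Nodup ∧
      (l ≠ 0 → ∀ t : ℝ, P.IsRoot t →
        ¬ (P - C l * Polynomial.derivative P).IsRoot t) :=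
  no_common_roots_and_strictly_hyperbolic_general n x hx P hP
end
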